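/- arXiv:1712.06022 — 3 statements merged into one kernel-verified Lean document; each statement's English description precedes it below -/
import Mathlib

section
/- Let a, w, b, a', w', b' be elements of the free monoid on an alphabet α with w ≠ 1 and w' ≠ 1. If the intersection a⟨w⟩b ∩ a'⟨w'⟩b' is infinite, then there exist integers m, n ≥ 1 and elements u, v of the free monoid such that w^m = u * v and w'^n = v * u (i.e., some positive powers of w and w' are conjugate as words). -/
/-!
Two distinct common points `a w^k b = a' w'^l b'` and `a w^(k+m) b = a' w'^(l+n) b'` (with
`m, n ≥ 1`) already suffice. Equidivisibility of the free monoid (Levi's lemma) applied to the first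
equation, say with `b` the shorter tail, gives `b' = s b` and `a w^k = a' w'^l s`; cancelling in the
second equation leaves `s w^m = w'^n s`. A word `s` with `s x = y s` makes `x` and `y` conjugate:
either `s` is a prefix of `y = s t`, and then `x = t s`, or `s = y s'` with `s' x = y s'` and `s'`
shorter.
-/

/-- The sandwich `a⟨w⟩b = {a * w^n * b : n ∈ ℕ}` in a monoid. -/
def sandwich {S : Type*} [Monoid S] (a w b : S) : Set S :=
  Set.range fun n : ℕ => a * w ^ n * b

namespace FreeMonoid

variable {α : Type*}

theorem length_pow (w : FreeMonoid α) (k : ℕ) : (w ^ k).length = k * w.length := by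
  induction k with
  | zero => simp
  | succ k ih => rw [pow_succ, length_mul, ih, Nat.succ_mul]

theorem strictMono_length_mul_pow_mul (a b : FreeMonoid α) {w : FreeMonoid α} (hw : w ≠ 1) :
    StrictMono fun k : ℕ => (a * w ^ k * b).length := by
  intro k l hkl
  have := Nat.mul_lt_mul_of_pos_right hkl (Nat.pos_of_ne_zero (mt length_eq_zero.mp hw))
  simp only [length_mul, length_pow]
  omega

/-- Levi's lemma: the free monoid is equidivisible. -/
theorem exists_of_mul_eq_mul_of_length_le {p q p' q' : FreeMonoid α} (h : p * q = p' * q')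
    (hq : q.length ≤ q'.length) : ∃ s, p = p' * s ∧ q' = s * q := by
  rcases List.append_eq_append_iff.mp h with ⟨s, hp', hq'⟩ | ⟨s, hp, hq'⟩
  · obtain rfl : s = [] := by
      have := congrArg List.length hq'
      simp only [List.length_append] at this
      exact List.length_eq_zero_iff.mp (by change q.toList.length ≤ q'.toList.length at hq; omega)
    exact ⟨1, toList.injective (by simpa using hp'.symm), toList.injective (by simpa using hq'.symm)⟩
  · exact ⟨s, hp, hq'⟩

theorem exists_mul_swap_of_semiconjBy {s x y : FreeMonoid α} (h : SemiconjBy s x y) :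
    ∃ u v, x = u * v ∧ y = v * u := by
  have hlen : x.length = y.length := by
    have := congrArg length h
    simp only [length_mul] at this
    omega
  rcases le_or_gt s.length x.length with hs | hs
  · obtain ⟨t, rfl, rfl⟩ := exists_of_mul_eq_mul_of_length_le h.symm (hlen ▸ hs)
    exact ⟨t, s, rfl, rfl⟩
  rcases eq_or_ne x 1 with rfl | hx
  · exact ⟨1, 1, rfl, length_eq_zero.mp (by rw [← hlen, length_one])⟩
  obtain ⟨s', hs', hs''⟩ := exists_of_mul_eq_mul_of_length_le h hs.le
  have : s'.length < s.length := by
    have := congrArg length hs''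
    have := Nat.pos_of_ne_zero (mt length_eq_zero.mp hx)
    simp only [length_mul] at *
    omega
  exact exists_mul_swap_of_semiconjBy (s := s') (hs''.symm.trans hs')
termination_by s.length

theorem exists_mul_swap_of_mul_eq_mul_of_mul_mul_eq_mul_mul {p q p' q' x y : FreeMonoid α}
    (h₁ : p * q = p' * q') (h₂ : p * x * q = p' * y * q') : ∃ u v, x = u * v ∧ y = v * u := by
  wlog hq : q.length ≤ q'.length generalizing p q p' q' x y
  · obtain ⟨u, v, hy, hx⟩ := this h₁.symm h₂.symm (le_of_not_ge hq)
    exact ⟨v, u, hx, hy⟩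
  obtain ⟨s, rfl, rfl⟩ := exists_of_mul_eq_mul_of_length_le h₁ hq
  exact exists_mul_swap_of_semiconjBy
    (mul_right_cancel (mul_left_cancel (a := p') (by simpa only [mul_assoc] using h₂)))

end FreeMonoid

open FreeMonoid in
theorem sandwich_infinite_inter_conjugate_powers
    {α : Type*} (a w b a' w' b' : FreeMonoid α) (hw : w ≠ 1) (hw' : w' ≠ 1)
    (hinf : (sandwich a w b ∩ sandwich a' w' b').Infinite) :
    ∃ (m n : ℕ), 1 ≤ m ∧ 1 ≤ n ∧
      ∃ u v : FreeMonoid α, w ^ m = u * v ∧ w' ^ n = v * u := by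
  obtain ⟨_, ⟨⟨k₁, rfl⟩, l₁, h₁⟩, _, ⟨⟨k₂, rfl⟩, l₂, h₂⟩, hne⟩ := hinf.nontrivial
  have hkne : k₁ ≠ k₂ := by
    rintro rfl
    exact hne rfl
  clear hne
  wlog hk : k₁ < k₂ generalizing k₁ k₂ l₁ l₂
  · exact this _ _ h₂ _ _ h₁ hkne.symm (lt_of_le_of_ne (not_lt.mp hk) hkne.symm)
  have hl : l₁ < l₂ := (strictMono_length_mul_pow_mul a' b' hw').lt_iff_lt.mp <| by
    simpa only [h₁, h₂] using strictMono_length_mul_pow_mul a b hw hk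
  obtain ⟨m, rfl⟩ := Nat.exists_eq_add_of_lt hk
  obtain ⟨n, rfl⟩ := Nat.exists_eq_add_of_lt hl
  refine ⟨m + 1, n + 1, by omega, by omega, exists_mul_swap_of_mul_eq_mul_of_mul_mul_eq_mul_mul
    (p := a * w ^ k₁) (p' := a' * w' ^ l₁) h₁.symm ?_⟩
  simpa only [pow_add, add_assoc, mul_assoc] using h₂.symm
end

section
/- Let a, w, b be elements of the free monoid on an alphabet α with w ≠ 1, and let A ⊆ ℕ be eventually periodic, i.e., there exist N ∈ ℕ and m ≥ 1 such that for all k ≥ N, k ∈ A if and only if k + m ∈ A. Then the set T = {a * w^k * b : k ∈ A} is a finite disjoint union of sandwiches; moreover these sandwiches can be taken of the form (a * w^t)⟨w^m⟩b together with singletons. -/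
open Set Function

section Progressions

variable {A : Set ℕ} {N m : ℕ}

def tailStep (N m k : ℕ) : ℕ := if N ≤ k then m else 0

theorem add_mul_mem_iff_of_periodic (hper : ∀ k ≥ N, (k ∈ A ↔ k + m ∈ A)) {k : ℕ}
    (hk : N ≤ k) (j : ℕ) : k + m * j ∈ A ↔ k ∈ A := by
  induction j with
  | zero => simp
  | succ j ih => rw [mul_add_one, ← add_assoc, ← hper _ (hk.trans (Nat.le_add_right _ _)), ih]

theorem range_add_tailStep_mul_subset (hper : ∀ k ≥ N, (k ∈ A ↔ k + m ∈ A)) {k : ℕ}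
    (hk : k ∈ A) : range (fun j => k + tailStep N m k * j) ⊆ A := by
  rintro _ ⟨j, rfl⟩
  unfold tailStep
  split_ifs with hNk
  · exact (add_mul_mem_iff_of_periodic hper hNk j).2 hk
  · simpa using hk

theorem exists_mem_range_add_tailStep_mul (hm : 1 ≤ m) (hper : ∀ k ≥ N, (k ∈ A ↔ k + m ∈ A))
    {n : ℕ} (hn : n ∈ A) : ∃ k < N + m, k ∈ A ∧ n ∈ range (fun j => k + tailStep N m k * j) := by
  by_cases hnN : n < N
  · exact ⟨n, by omega, hn, 0, by simp⟩
  have hdiv : N + (n - N) % m + m * ((n - N) / m) = n := by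
    have := Nat.mod_add_div (n - N) m
    omega
  have hlt : (n - N) % m < m := Nat.mod_lt _ (by omega)
  have hstep : tailStep N m (N + (n - N) % m) = m := if_pos (Nat.le_add_right _ _)
  refine ⟨N + (n - N) % m, by omega, ?_, (n - N) / m, by simp only [hstep]; exact hdiv⟩
  rw [← add_mul_mem_iff_of_periodic hper (Nat.le_add_right _ _) ((n - N) / m), hdiv]
  exact hn

theorem disjoint_range_add_tailStep_mul {k k' : ℕ} (hk : k < N + m) (hk' : k' < N + m)
    (hne : k ≠ k') :
    Disjoint (range fun j => k + tailStep N m k * j) (range fun j => k' + tailStep N m k' * j) := by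
  rw [Set.disjoint_left]
  rintro _ ⟨j, rfl⟩ ⟨j', h⟩
  refine hne ?_
  dsimp only [tailStep] at h
  split_ifs at h with hNk hNk'
  · have hmod := congrArg (· % m) (show k' - N + m * j' = k - N + m * j by omega)
    simp only [Nat.add_mul_mod_self_left, Nat.mod_eq_of_lt (by omega : k - N < m),
      Nat.mod_eq_of_lt (by omega : k' - N < m)] at hmod
    omega
  all_goals
    simp only [zero_mul, add_zero] at h
    omega

theorem eq_biUnion_range_add_tailStep_mul [DecidablePred (· ∈ A)] (hm : 1 ≤ m)
    (hper : ∀ k ≥ N, (k ∈ A ↔ k + m ∈ A)) :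
    A = ⋃ k ∈ (Finset.range (N + m)).filter (· ∈ A), range fun j => k + tailStep N m k * j := by
  ext n
  simp only [mem_iUnion, exists_prop, Finset.mem_filter, Finset.mem_range]
  constructor
  · intro hn
    obtain ⟨k, hkN, hkA, hnk⟩ := exists_mem_range_add_tailStep_mul hm hper hn
    exact ⟨k, ⟨hkN, hkA⟩, hnk⟩
  · rintro ⟨k, ⟨-, hkA⟩, hnk⟩
    exact range_add_tailStep_mul_subset hper hkA hnk

end Progressions

theorem sandwich_mul_pow_pow {M : Type*} [Monoid M] (a w b : M) (k d : ℕ) :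
    sandwich (a * w ^ k) (w ^ d) b =
      (fun n => a * w ^ n * b) '' range (fun j => k + d * j) := by
  rw [sandwich, ← range_comp]
  congr 1
  funext j
  simp only [comp_apply, pow_add, pow_mul, mul_assoc]

theorem FreeMonoid.length_pow_s11 {α : Type*} (w : FreeMonoid α) (n : ℕ) :
    (w ^ n).length = n * w.length := by
  induction n with
  | zero => simp
  | succ n ih => rw [pow_succ, FreeMonoid.length_mul, ih, add_one_mul]

theorem FreeMonoid.injective_mul_pow_mul {α : Type*} (a b : FreeMonoid α) {w : FreeMonoid α}
    (hw : w ≠ 1) : Injective fun n : ℕ => a * w ^ n * b := by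
  intro n n' h
  have hlen := congrArg FreeMonoid.length h
  simp only [FreeMonoid.length_mul, FreeMonoid.length_pow_s11] at hlen
  exact Nat.eq_of_mul_eq_mul_right
    (Nat.pos_of_ne_zero (mt FreeMonoid.length_eq_zero.1 hw)) (by omega)

theorem eventually_periodic_set_of_powers_decomposes
    {α : Type*} (a w b : FreeMonoid α) (hw : w ≠ 1)
    (A : Set ℕ) (N : ℕ) (m : ℕ) (hm : 1 ≤ m)
    (hper : ∀ k ≥ N, (k ∈ A ↔ k + m ∈ A)) :
    ∃ (s : ℕ) (p q r : Fin s → FreeMonoid α),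
      (∀ i j, i ≠ j →
        Disjoint (sandwich (p i) (q i) (r i)) (sandwich (p j) (q j) (r j))) ∧
      ({z : FreeMonoid α | ∃ k ∈ A, z = a * w ^ k * b} =
        ⋃ i, sandwich (p i) (q i) (r i)) ∧
      (∀ i, (∃ t : ℕ, p i = a * w ^ t ∧ q i = w ^ m ∧ r i = b) ∨
        ∃ z : FreeMonoid α, sandwich (p i) (q i) (r i) = {z}) := by
  classical
  set F := (Finset.range (N + m)).filter (· ∈ A)
  set g := F.orderEmbOfFin rfl
  have hgN (i) : g i < N + m :=
    Finset.mem_range.1 (Finset.mem_filter.1 (F.orderEmbOfFin_mem rfl i)).1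
  refine ⟨F.card, fun i => a * w ^ g i, fun i => w ^ tailStep N m (g i), fun _ => b,
    fun i j hij => ?_, ?_, fun i => ?_⟩
  · rw [sandwich_mul_pow_pow, sandwich_mul_pow_pow]
    exact disjoint_image_of_injective (FreeMonoid.injective_mul_pow_mul a b hw)
      (disjoint_range_add_tailStep_mul (hgN i) (hgN j) (g.injective.ne hij))
  · have hA : {z | ∃ k ∈ A, z = a * w ^ k * b} = (fun n => a * w ^ n * b) '' A := by
      ext; simp [eq_comm]
    simp only [hA, sandwich_mul_pow_pow, ← image_iUnion]
    rw [← biUnion_range (f := g) (g := fun k => range fun j => k + tailStep N m k * j),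
      Finset.range_orderEmbOfFin, Finset.set_biUnion_coe,
      ← eq_biUnion_range_add_tailStep_mul hm hper]
  · by_cases hNg : N ≤ g i
    · exact .inl ⟨g i, rfl, by simp [tailStep, hNg], rfl⟩
    · exact .inr ⟨a * w ^ g i * b, by simp [sandwich, tailStep, hNg]⟩
end

section
/- Let S be a monoid and let d : S → ℕ satisfy d(1) = 0 and d(s·t) = d(s) + d(t) for all s, t ∈ S. Suppose S is the disjoint union of a finite set Y and a free sandwich a⟨w⟩b (so the map n ↦ a * w^n * b is injective and its range is disjoint from Y), and suppose d(w) > 0. Then there exists a finite set F ⊆ S such that S = {w^n : n ∈ ℕ} ∪ F; that is, S is the union of the monogenic submonoid generated by w and a finite set. -/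
theorem exists_forall_ge_pow_mem_of_univ_eq_union {S : Type*} [Monoid S] {w : S}
    (hw : Function.Injective (w ^ · : ℕ → S)) {Y T : Set S} (hY : Y.Finite)
    (hcover : (Set.univ : Set S) = Y ∪ T) : ∃ K, ∀ k ≥ K, w ^ k ∈ T := by
  obtain ⟨K, hK⟩ := (hY.preimage hw.injOn).bddAbove
  refine ⟨K + 1, fun k hk => ?_⟩
  have hmem : w ^ k ∈ Y ∪ T := hcover ▸ Set.mem_univ _
  exact hmem.resolve_left fun hkY => by have := hK hkY; omega

section Degree

variable {S : Type*} [Monoid S] {d : S → ℕ}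

theorem degree_pow (hd1 : d 1 = 0) (hdmul : ∀ s t : S, d (s * t) = d s + d t) (w : S) (k : ℕ) :
    d (w ^ k) = k * d w := by
  induction k with
  | zero => simpa using hd1
  | succ k ih => rw [pow_succ, hdmul, ih, Nat.succ_mul]

theorem degree_mul_pow_mul (hd1 : d 1 = 0) (hdmul : ∀ s t : S, d (s * t) = d s + d t)
    (a w b : S) (n : ℕ) : d (a * w ^ n * b) = d a + d b + n * d w := by
  rw [hdmul, hdmul, degree_pow hd1 hdmul]
  ring

theorem pow_injective_of_degree_pos (hd1 : d 1 = 0) (hdmul : ∀ s t : S, d (s * t) = d s + d t)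
    {w : S} (hdw : 0 < d w) : Function.Injective (w ^ · : ℕ → S) := by
  intro i j h
  have hdeg : i * d w = j * d w := by
    simpa only [degree_pow hd1 hdmul] using congrArg d h
  exact Nat.eq_of_mul_eq_mul_right hdw hdeg

theorem exists_forall_ge_mul_pow_mul_eq_pow_add (hd1 : d 1 = 0)
    (hdmul : ∀ s t : S, d (s * t) = d s + d t) {a w b : S} (hdw : 0 < d w) {K : ℕ}
    (hK : ∀ k ≥ K, w ^ k ∈ sandwich a w b) :
    ∃ n₀ c : ℕ, ∀ n ≥ n₀, a * w ^ n * b = w ^ (n + c) := by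
  have hdeg : ∀ {n k : ℕ}, a * w ^ n * b = w ^ k → d a + d b + n * d w = k * d w := fun h => by
    rw [← degree_mul_pow_mul hd1 hdmul, h, degree_pow hd1 hdmul]
  obtain ⟨n₀, hn₀⟩ := hK K le_rfl
  have hn₀K : n₀ ≤ K := by
    refine Nat.le_of_mul_le_mul_right ?_ hdw
    rw [← hdeg hn₀]
    exact Nat.le_add_left _ _
  obtain ⟨c, rfl⟩ := Nat.exists_eq_add_of_le hn₀K
  refine ⟨n₀, c, fun n hn => ?_⟩
  obtain ⟨m, hm⟩ := hK (n + c) (by omega)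
  have hmn : m * d w = n * d w := by
    have h₀ := hdeg hn₀
    have hm' := hdeg hm
    rw [add_mul] at h₀ hm'
    omega
  rwa [Nat.eq_of_mul_eq_mul_right hdw hmn] at hm

end Degree

theorem gamma_one_implies_monogenic_up_to_finite_general
    {S : Type*} [Monoid S] (d : S → ℕ)
    (hd1 : d 1 = 0) (hdmul : ∀ s t : S, d (s * t) = d s + d t)
    (Y : Set S) (hY : Y.Finite) (a w b : S)
    (hcover : (Set.univ : Set S) = Y ∪ sandwich a w b)
    (hdw : 0 < d w) :
    ∃ F : Set S, F.Finite ∧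
      (Set.univ : Set S) = Set.range (fun n : ℕ => w ^ n) ∪ F := by
  obtain ⟨K, hK⟩ := exists_forall_ge_pow_mem_of_univ_eq_union
    (pow_injective_of_degree_pos hd1 hdmul hdw) hY hcover
  obtain ⟨n₀, c, hshift⟩ := exists_forall_ge_mul_pow_mul_eq_pow_add hd1 hdmul hdw hK
  refine ⟨Y ∪ (fun n => a * w ^ n * b) '' Set.Iio n₀, hY.union ((Set.finite_Iio n₀).image _), ?_⟩
  refine (Set.eq_univ_of_forall fun s => ?_).symm
  rcases hcover ▸ Set.mem_univ s with hs | ⟨n, rfl⟩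
  · exact .inr (.inl hs)
  · rcases lt_or_ge n n₀ with hn | hn
    · exact .inr (.inr ⟨n, hn, rfl⟩)
    · exact .inl ⟨n + c, (hshift n hn).symm⟩

theorem gamma_one_implies_monogenic_up_to_finite
    {S : Type*} [Monoid S] (d : S → ℕ)
    (hd1 : d 1 = 0) (hdmul : ∀ s t : S, d (s * t) = d s + d t)
    (Y : Set S) (hY : Y.Finite) (a w b : S)
    (hfree : Function.Injective fun n : ℕ => a * w ^ n * b)
    (hdisj : Disjoint Y (sandwich a w b))
    (hcover : (Set.univ : Set S) = Y ∪ sandwich a w b)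
    (hdw : 0 < d w) :
    ∃ F : Set S, F.Finite ∧
      (Set.univ : Set S) = Set.range (fun n : ℕ => w ^ n) ∪ F :=
  gamma_one_implies_monogenic_up_to_finite_general d hd1 hdmul Y hY a w b hcover hdw
end
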